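/- Let f, g, h ∈ F with g obtained from f by a legal move of weight zero starting at the p-th largest element of f⁻¹(×), and h obtained from f by a legal move of weight zero starting at the r-th largest element of f⁻¹(×), with p < r. Then g and h are not connected by a legal move of weight zero (in either direction). -/

import Mathlib

namespace KacComb

/-- Core-free diagrams: functions from `ℤ` to `{×, ∘}`, with `true` = `×`. -/
abbrev F : Type := ℤ → Bool

/-- `tally f b c` = number of `×`'s minus number of `∘`'s of `f` strictly between `b` and `c`. -/
noncomputable def tally (f : F) (b c : ℤ) : ℤ :=
  (((Finset.Ioo b c).filter fun x => f x = true).card : ℤ) -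
    (((Finset.Ioo b c).filter fun x => f x = false).card : ℤ)

/-- `move f a b` = `f^a_b`: replace the `×` at `a` by `∘` and the `∘` at `b` by `×`. -/
def move (f : F) (a b : ℤ) : F :=
  Function.update (Function.update f a false) b true

/-- The move `f ↦ f^a_b` (start `a`, end `b`) is legal. -/
def IsLegal (f : F) (a b : ℤ) : Prop :=
  b < a ∧ f a = true ∧ f b = false ∧ ∀ c : ℤ, b < c → c ≤ a → 0 ≤ tally f b c

/-- `g` is obtained from `f` by a legal move with start `a` and end `b`. -/
def LegalMove (f g : F) (a b : ℤ) : Prop :=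
  IsLegal f a b ∧ g = move f a b

/-- The cap diagram of `g` has a cap beginning at `b` and ending at `a`. -/
def HasCap (g : F) (b a : ℤ) : Prop :=
  b < a ∧ g b = true ∧ g a = false ∧ tally g b a = 0 ∧
    ∀ c : ℤ, b < c → c ≤ a → 0 ≤ tally g b c

/-- The cap diagram of `g` matches the weight diagram of `f`. -/
def Matches (g f : F) : Prop :=
  (∀ b a : ℤ, HasCap g b a →
      (f b = true ∧ f a = false) ∨ (f b = false ∧ f a = true)) ∧
  ∀ x : ℤ, f x = true → ∃ b a : ℤ, HasCap g b a ∧ (x = b ∨ x = a)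

/-- `P(f)`: the set of `g` whose cap diagram matches the weight diagram of `f`. -/
def Pset (f : F) : Set F := {g | Matches g f}

/-!
A move `f ↦ f^a_b` changes `f` only at `a` (`× ↦ ∘`) and `b` (`∘ ↦ ×`), so when one move
connects `g` and `h` its start and end are read off from the points where `g` and `h` differ.
If the two moves from `f` end at different points, then `g` and `h` differ at four points and no
move connects them. If they end at the same point `b`, then `g` and `h` differ only at `a' < a`:
a move `g ↦ h` would have to start at `a'` and end at `a > a'`, and a move `h ↦ g` goes from `a`
to `a'`, but splitting `tally f b a = 0` at the cross `a'` gives `tally h a' a = tally f a' a = -1`.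
-/

theorem tally_eq_sum (f : F) (b c : ℤ) :
    tally f b c = ∑ x ∈ Finset.Ioo b c, if f x = true then (1 : ℤ) else -1 := by
  rw [tally, Finset.sum_ite, Finset.sum_const, Finset.sum_const]
  simp only [Int.nsmul_eq_mul, mul_one, Bool.not_eq_true, Int.reduceNeg, mul_neg]
  ring

theorem tally_congr {f g : F} {b c : ℤ} (hfg : ∀ x, b < x → x < c → f x = g x) :
    tally f b c = tally g b c := by
  simp only [tally_eq_sum]
  refine Finset.sum_congr rfl fun x hx => ?_
  rw [Finset.mem_Ioo] at hx
  rw [hfg x hx.1 hx.2]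

theorem tally_split (f : F) {b m c : ℤ} (hbm : b < m) (hmc : m < c) :
    tally f b c = tally f b m + (if f m = true then 1 else -1) + tally f m c := by
  have hunion : Finset.Ioo b m ∪ Finset.Ico m c = Finset.Ioo b c := by
    ext x
    simp only [Finset.mem_union, Finset.mem_Ioo, Finset.mem_Ico]
    omega
  have hdisj : Disjoint (Finset.Ioo b m) (Finset.Ico m c) := by
    rw [Finset.disjoint_left]
    intro x hx hx'
    rw [Finset.mem_Ioo] at hx
    rw [Finset.mem_Ico] at hx'
    omega
  simp only [tally_eq_sum]
  rw [← hunion, Finset.sum_union hdisj, ← Finset.Ioo_insert_left hmc,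
    Finset.sum_insert Finset.left_notMem_Ioo]
  ring

namespace LegalMove

variable {f g h : F} {a b a' b' s t : ℤ}

theorem apply_of_ne (hm : LegalMove f g a b) {x : ℤ} (hxa : x ≠ a) (hxb : x ≠ b) :
    g x = f x := by
  simp [hm.2, move, hxa, hxb]

theorem apply_start (hm : LegalMove f g a b) : g a = false := by
  simp [hm.2, move, hm.1.1.ne']

theorem apply_end (hm : LegalMove f g a b) : g b = true := by
  simp [hm.2, move]

theorem start_ne_end (hm : LegalMove f g a b) (hm' : LegalMove f h a' b') : a ≠ b' := by
  rintro rfl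
  simpa [hm.1.2.1] using hm'.1.2.2.1

theorem eq_start_of_apply (hm : LegalMove f g a b) {x : ℤ} (hfx : f x = true)
    (hgx : g x = false) : x = a := by
  by_contra hxa
  have hxb : x ≠ b := by
    rintro rfl
    simp [hm.1.2.2.1] at hfx
  simp [hm.apply_of_ne hxa hxb, hfx] at hgx

theorem eq_end_of_apply (hm : LegalMove f g a b) {x : ℤ} (hfx : f x = false)
    (hgx : g x = true) : x = b := by
  by_contra hxb
  have hxa : x ≠ a := by
    rintro rfl
    simp [hm.1.2.1] at hfx
  simp [hm.apply_of_ne hxa hxb, hfx] at hgx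

/-- A move `g ↦ h` would have to end both at `a` and at `b'`. -/
theorem not_legalMove_of_end_ne (hg : LegalMove f g a b) (hh : LegalMove f h a' b')
    (ha : a ≠ a') (hb : b ≠ b') : ¬ LegalMove g h s t := by
  intro hm
  have hab' : a ≠ b' := hg.start_ne_end hh
  have hat : a = t :=
    hm.eq_end_of_apply hg.apply_start ((hh.apply_of_ne ha hab').trans hg.1.2.1)
  have hb't : b' = t :=
    hm.eq_end_of_apply ((hg.apply_of_ne hab'.symm hb.symm).trans hh.1.2.2.1) hh.apply_end
  exact hab' (hat.trans hb't.symm)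

theorem not_legalMove_of_end_eq (hg : LegalMove f g a b) (hh : LegalMove f h a' b)
    (hlt : a' < a) : ¬ LegalMove g h s t := by
  intro hm
  have ha's : a' = s :=
    hm.eq_start_of_apply ((hg.apply_of_ne hlt.ne hh.1.1.ne').trans hh.1.2.1) hh.apply_start
  have hat : a = t :=
    hm.eq_end_of_apply hg.apply_start ((hh.apply_of_ne hlt.ne' hg.1.1.ne').trans hg.1.2.1)
  have := hm.1.1
  omega

theorem tally_ne_zero_of_end_eq (hg : LegalMove f g a b) (hwg : tally f b a = 0)
    (hh : LegalMove f h a' b) (hwh : tally f b a' = 0) (hlt : a' < a)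
    (hm : LegalMove h g s t) : tally h t s ≠ 0 := by
  have hba' : b < a' := hh.1.1
  have has : a = s :=
    hm.eq_start_of_apply ((hh.apply_of_ne hlt.ne' hg.1.1.ne').trans hg.1.2.1) hg.apply_start
  have ha't : a' = t :=
    hm.eq_end_of_apply hh.apply_start ((hg.apply_of_ne hlt.ne hba'.ne').trans hh.1.2.1)
  subst has ha't
  have hagree : tally h a' a = tally f a' a :=
    tally_congr fun x hx hx' => hh.apply_of_ne (by omega) (by omega)
  have hsplit := tally_split f hba' hlt
  rw [if_pos hh.1.2.1] at hsplit
  omega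

end LegalMove

theorem stmt10_general (f g h : F)
    (a b a' b' : ℤ)
    (hg : LegalMove f g a b) (hwg : tally f b a = 0)
    (hh : LegalMove f h a' b') (hwh : tally f b' a' = 0)
    (hlt : a' < a) :
    ¬ ∃ s t : ℤ,
        (LegalMove g h s t ∧ tally g t s = 0) ∨
        (LegalMove h g s t ∧ tally h t s = 0) := by
  rintro ⟨s, t, ⟨hm, -⟩ | ⟨hm, hw⟩⟩ <;> by_cases hb : b = b'
  · subst hb
    exact hg.not_legalMove_of_end_eq hh hlt hm
  · exact hg.not_legalMove_of_end_ne hh hlt.ne' hb hm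
  · subst hb
    exact hg.tally_ne_zero_of_end_eq hwg hh hwh hlt hm hw
  · exact hh.not_legalMove_of_end_ne hg hlt.ne (Ne.symm hb) hm

/-- let `g` be obtained from `f` by a weight-zero legal move starting at
`a` (the `p`-th largest cross of `f`), and `h` by a weight-zero legal move starting at
`a' < a` (the `r`-th largest cross, `p < r`).  Then `g` and `h` are not connected by a
weight-zero legal move in either direction. -/
theorem stmt10 (f g h : F) (hf : {x : ℤ | f x = true}.Finite)
    (a b a' b' : ℤ)
    (hg : LegalMove f g a b) (hwg : tally f b a = 0)
    (hh : LegalMove f h a' b') (hwh : tally f b' a' = 0)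
    (hlt : a' < a) :
    ¬ ∃ s t : ℤ,
        (LegalMove g h s t ∧ tally g t s = 0) ∨
        (LegalMove h g s t ∧ tally h t s = 0) :=
  stmt10_general f g h a b a' b' hg hwg hh hwh hlt

end KacComb
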